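/- arXiv:1607.07920 — 2 statements merged into one kernel-verified Lean document; each statement's English description precedes it below -/
import Mathlib

section
/- Let q ≥ 2 and k ≥ 2, and let C be the single parity check code in (Z_q)^k. Fix a block B = B_{1,0}. For each codeword β ∉ B, there exists exactly one tuple (l_2, ..., l_k) ∈ (Z_q)^{k-1} such that B ∩ B_{2,l_2} ∩ ... ∩ B_{k,l_k} = ∅ and B_{2,l_2} ∩ ... ∩ B_{k,l_k} = {β}. -/
open Finset Filter Topology

/-- The (k, k-1) single parity check code over `ZMod q`, with `k = n+1`:
vectors whose last coordinate equals the sum of the first `n` coordinates. -/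
def SPC (q n : ℕ) : Set (Fin (n+1) → ZMod q) :=
  {c | c (Fin.last n) = ∑ j : Fin n, c (Fin.castSucc j)}

/-- The block `B_{i,l}`: codewords whose `i`-th coordinate equals `l`. -/
def Block (q n : ℕ) (i : Fin (n+1)) (l : ZMod q) : Set (Fin (n+1) → ZMod q) :=
  {c ∈ SPC q n | c i = l}

/-! A codeword of the single parity check code is determined by its coordinates `2, …, k`:
the parity check recovers the first one. Hence the blocks `B_{2,l₂}, …, B_{k,l_k}` cut out
at most one codeword, and exactly one, `β`, when `lᵢ = βᵢ`; for `β ∉ B` that codeword misses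
the block `B`. -/

namespace SPC

variable {q n : ℕ} {c β : Fin (n+1) → ZMod q}

lemma sub_mem (hc : c ∈ SPC q n) (hβ : β ∈ SPC q n) : c - β ∈ SPC q n := by
  simp only [SPC, Set.mem_ofPred_eq, Pi.sub_apply, Finset.sum_sub_distrib] at *
  rw [hc, hβ]

lemma sum_eq_last_add_last (hc : c ∈ SPC q n) :
    ∑ i, c i = c (Fin.last n) + c (Fin.last n) := by
  rw [Fin.sum_univ_castSucc, ← hc]

lemma eq_zero_of_forall_succ_eq_zero (hc : c ∈ SPC q n) (h : ∀ j : Fin n, c j.succ = 0) :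
    c = 0 := by
  have h0 : c 0 = c (Fin.last n) + c (Fin.last n) := by
    simpa [Fin.sum_univ_succ, h] using sum_eq_last_add_last hc
  funext i
  cases i using Fin.cases with
  | succ j => exact h j
  | zero =>
    obtain hlast | ⟨j, hlast⟩ := Fin.eq_zero_or_eq_succ (Fin.last n)
    · rw [hlast] at h0
      simpa using h0
    · simpa [hlast, h j] using h0

lemma ext_succ (hc : c ∈ SPC q n) (hβ : β ∈ SPC q n) (h : ∀ j : Fin n, c j.succ = β j.succ) :
    c = β :=
  sub_eq_zero.mp <| eq_zero_of_forall_succ_eq_zero (sub_mem hc hβ) fun j => sub_eq_zero.mpr (h j)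

end SPC

lemma iInter_block_succ_eq_singleton {q n : ℕ} (hn : 1 ≤ n) {β : Fin (n+1) → ZMod q}
    (hβ : β ∈ SPC q n) : ⋂ j : Fin n, Block q n j.succ (β j.succ) = {β} := by
  ext c
  simp only [Set.mem_iInter, Set.mem_singleton_iff]
  constructor
  · intro hc
    -- `hn` supplies a block, which is what puts `c` in the code (an empty intersection is `univ`)
    exact SPC.ext_succ (hc ⟨0, hn⟩).1 hβ fun j => (hc j).2
  · rintro rfl j
    exact ⟨hβ, rfl⟩

theorem stmt_8_general (q n : ℕ) (hn : 1 ≤ n)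
    (β : Fin (n+1) → ZMod q) (hβ : β ∈ SPC q n) (hβB : β ∉ Block q n 0 0) :
    ∃! l : Fin n → ZMod q,
      Block q n 0 0 ∩ (⋂ j : Fin n, Block q n (Fin.succ j) (l j)) = ∅ ∧
      (⋂ j : Fin n, Block q n (Fin.succ j) (l j)) = {β} := by
  have hinter := iInter_block_succ_eq_singleton hn hβ
  refine ⟨fun j => β j.succ, ⟨?_, hinter⟩, ?_⟩
  · rw [hinter]
    exact Set.inter_singleton_eq_empty.mpr hβB
  · rintro l ⟨-, hl⟩
    have hβl : β ∈ ⋂ j : Fin n, Block q n j.succ (l j) := hl ▸ rfl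
    funext j
    exact ((Set.mem_iInter.mp hβl j).2).symm

/-- for each codeword β outside the block B = B_{1,0}, there is exactly one
tuple (l₂,…,l_k) with B ∩ B_{2,l₂} ∩ … ∩ B_{k,l_k} = ∅ and B_{2,l₂} ∩ … ∩ B_{k,l_k} = {β}. -/
theorem stmt_8 (q n : ℕ) (hq : 2 ≤ q) (hn : 1 ≤ n)
    (β : Fin (n+1) → ZMod q) (hβ : β ∈ SPC q n) (hβB : β ∉ Block q n 0 0) :
    ∃! l : Fin n → ZMod q,
      Block q n 0 0 ∩ (⋂ j : Fin n, Block q n (Fin.succ j) (l j)) = ∅ ∧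
      (⋂ j : Fin n, Block q n (Fin.succ j) (l j)) = {β} :=
  stmt_8_general q n hn β hβ hβB
end

section
/- Let q ≥ 2 and k ≥ 3. In the single parity check code design, for any two blocks B_{i,l} and B_{j,l'} from distinct parallel classes (i ≠ j), the intersection B_{i,l} ∩ B_{j,l'} has exactly q^{k-3} elements. -/
open Finset Filter Topology

/-!
The intersection `B_{i,l} ∩ B_{j,l'}` is the fibre over `(0, l, l')` of the additive map
`c ↦ (parity defect of c, c i, c j)`. Since `k ≥ 3` there is a third coordinate `p`, and moving
`c p` alone shifts the parity defect by `± c p`, so this map onto `(ZMod q)³` is surjective.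
All fibres of a surjective group homomorphism are cosets of its kernel, so each has
`q ^ k / q ^ 3` elements.
-/

theorem AddMonoidHom.ncard_preimage_singleton_mul_card {G H : Type*} [AddGroup G] [AddGroup H]
    (f : G →+ H) (hf : Function.Surjective f) (y : H) :
    (f ⁻¹' {y}).ncard * Nat.card H = Nat.card G := by
  rw [← Nat.card_coe_set_eq, Nat.card_congr (f.fiberEquivKerOfSurjective hf y),
    ← f.ker.card_mul_index, AddSubgroup.index_ker, f.range_eq_top.2 hf, AddSubgroup.card_top]

section ParityCheck

variable {M : Type*} [AddCommGroup M] {n : ℕ}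

variable (M n) in
def parityCheck : (Fin (n + 1) → M) →+ M :=
  Pi.evalAddMonoidHom _ (Fin.last n) - ∑ m : Fin n, Pi.evalAddMonoidHom _ m.castSucc

theorem parityCheck_apply (c : Fin (n + 1) → M) :
    parityCheck M n c = c (Fin.last n) - ∑ m : Fin n, c m.castSucc := by
  simp [parityCheck, AddMonoidHom.finsetSum_apply]

theorem parityCheck_single_surjective (p : Fin (n + 1)) :
    Function.Surjective fun t : M => parityCheck M n (Pi.single p t) := by
  induction p using Fin.lastCases with
  | last => exact fun a => ⟨a, by simp [parityCheck_apply]⟩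
  | cast r =>
    exact fun a => ⟨-a, by simp [parityCheck_apply, Pi.single_apply, (Fin.castSucc_lt_last r).ne']⟩

def parityCheckEval (i j : Fin (n + 1)) : (Fin (n + 1) → M) →+ M × M × M :=
  (parityCheck M n).prod ((Pi.evalAddMonoidHom _ i).prod (Pi.evalAddMonoidHom _ j))

theorem parityCheckEval_surjective {i j p : Fin (n + 1)} (hij : i ≠ j) (hpi : p ≠ i)
    (hpj : p ≠ j) : Function.Surjective (parityCheckEval (M := M) i j) := by
  rintro ⟨a, b, b'⟩
  set c₀ : Fin (n + 1) → M := Pi.single i b + Pi.single j b'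
  obtain ⟨t, ht⟩ := parityCheck_single_surjective (M := M) p (a - parityCheck M n c₀)
  refine ⟨c₀ + Pi.single p t, ?_⟩
  simp only at ht
  simp [parityCheckEval, c₀, ht, hij, hij.symm, hpi, hpj]

end ParityCheck

theorem mem_SPC_iff_parityCheck_eq_zero {q n : ℕ} (c : Fin (n + 1) → ZMod q) :
    c ∈ SPC q n ↔ parityCheck (ZMod q) n c = 0 := by
  rw [parityCheck_apply, sub_eq_zero]
  rfl

theorem Block_inter_Block_eq_preimage (q n : ℕ) (i j : Fin (n + 1)) (l l' : ZMod q) :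
    Block q n i l ∩ Block q n j l' = parityCheckEval i j ⁻¹' {(0, l, l')} := by
  ext c
  simp only [Block, mem_SPC_iff_parityCheck_eq_zero, Set.mem_inter_iff, Set.mem_ofPred_eq,
    parityCheckEval, Set.mem_preimage, AddMonoidHom.prod_apply, Pi.evalAddMonoidHom_apply,
    Set.mem_singleton_iff, Prod.mk.injEq]
  tauto

/-- two blocks from distinct parallel classes intersect in exactly
q^(k-3) codewords (k = n+1 ≥ 3). -/
theorem stmt_15 (q n : ℕ) (hq : 2 ≤ q) (hn : 2 ≤ n)
    (i j : Fin (n+1)) (hij : i ≠ j) (l l' : ZMod q) :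
    (Block q n i l ∩ Block q n j l').ncard = q ^ (n - 2) := by
  have hcard_pair : #{i, j} < #(univ : Finset (Fin (n + 1))) := by
    rw [card_univ, Fintype.card_fin]
    exact card_le_two.trans_lt (by omega)
  obtain ⟨p, -, hp⟩ := exists_mem_notMem_of_card_lt_card hcard_pair
  rw [mem_insert, mem_singleton, not_or] at hp
  have hcard := (parityCheckEval i j).ncard_preimage_singleton_mul_card
    (parityCheckEval_surjective hij hp.1 hp.2) ((0 : ZMod q), l, l')
  simp only [Nat.card_prod, Nat.card_fun, Nat.card_zmod, Nat.card_eq_fintype_card,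
    Fintype.card_fin] at hcard
  rw [Block_inter_Block_eq_preimage]
  have hpow : q ^ (n + 1) = q ^ (n - 2) * (q * (q * q)) := by
    rw [← pow_three, ← pow_add]; congr 1; omega
  exact Nat.eq_of_mul_eq_mul_right (by positivity) (hcard.trans hpow)
end
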